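/- arXiv:2105.10774 — 2 statements merged into one kernel-verified Lean document; each statement's English description precedes it below -/
import Mathlib

section
/- Let θ, α, β be real numbers with 0 < α, 0 < β, |α − β| < θ < α + β, and α + β ≤ π. Then there exist unit vectors u, b, e in three-dimensional Euclidean space such that angle(u, b) = θ, angle(u, e) = α, and angle(b, e) = β, where angle denotes the undirected angle between vectors. -/
open Real

set_option maxHeartbeats 1000000

private lemma euclid_norm_three (x y z : ℝ) (h : x^2 + y^2 + z^2 = 1) :
    ‖((WithLp.equiv 2 (Fin 3 → ℝ)).symm ![x, y, z] : EuclideanSpace ℝ (Fin 3))‖ = 1 := by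
  rw [EuclideanSpace.norm_eq]
  simp [Fin.sum_univ_three, ← sq, abs_sq]
  linarith

private lemma euclid_inner_three (x y z a b c : ℝ) :
    (inner ℝ ((WithLp.equiv 2 (Fin 3 → ℝ)).symm ![x, y, z] : EuclideanSpace ℝ (Fin 3))
      ((WithLp.equiv 2 (Fin 3 → ℝ)).symm ![a, b, c]) : ℝ) = x*a + y*b + z*c := by
  simp [PiLp.inner_apply, Fin.sum_univ_three, mul_comm]

/-- For `0 < α`, `0 < β`, `|α − β| < θ < α + β`, `α + β ≤ π`, there exist unit
vectors `u, b, e` in three-dimensional Euclidean space realizing the angles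
`angle u b = θ`, `angle u e = α`, `angle b e = β`. -/
theorem exists_unit_vectors_with_angles (θ α β : ℝ)
    (hα : 0 < α) (hβ : 0 < β) (hlo : |α - β| < θ) (hhi : θ < α + β)
    (hαβ : α + β ≤ π) :
    ∃ u b e : EuclideanSpace ℝ (Fin 3),
      ‖u‖ = 1 ∧ ‖b‖ = 1 ∧ ‖e‖ = 1 ∧
      InnerProductGeometry.angle u b = θ ∧
      InnerProductGeometry.angle u e = α ∧
      InnerProductGeometry.angle b e = β := by
  obtain ⟨h1, h2⟩ := abs_lt.mp hlo
  have hθpos : 0 < θ := lt_of_le_of_lt (abs_nonneg _) hlo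
  have hθπ : θ < π := lt_of_lt_of_le hhi hαβ
  have hαπ : α < π := by linarith
  have hβπ : β < π := by linarith
  have hsα : 0 < Real.sin α := Real.sin_pos_of_pos_of_lt_pi hα hαπ
  have hsθ : 0 < Real.sin θ := Real.sin_pos_of_pos_of_lt_pi hθpos hθπ
  -- factor A
  have hA : Real.cos β < Real.cos (θ - α) := by
    have habs : |θ - α| < β := abs_lt.mpr ⟨by linarith, by linarith⟩
    have := Real.cos_lt_cos_of_nonneg_of_le_pi (abs_nonneg (θ - α)) hβπ.le habs
    rwa [Real.cos_abs] at this
  -- factor B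
  have hB : Real.cos (θ + α) < Real.cos β := by
    rcases le_or_gt (θ + α) π with h | h
    · exact Real.cos_lt_cos_of_nonneg_of_le_pi hβ.le h (by linarith)
    · have h2π : Real.cos (θ + α) = Real.cos (2 * π - (θ + α)) := by
        rw [Real.cos_two_pi_sub]
      rw [h2π]
      exact Real.cos_lt_cos_of_nonneg_of_le_pi hβ.le (by linarith) (by linarith)
  rw [Real.cos_sub] at hA
  rw [Real.cos_add] at hB
  have hkey : (Real.cos β - Real.cos θ * Real.cos α)^2 ≤ (Real.sin θ * Real.sin α)^2 := by
    nlinarith [mul_pos (sub_pos.mpr hA) (sub_pos.mpr hB)]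
  set c : ℝ := (Real.cos β - Real.cos θ * Real.cos α) / Real.sin α with hc
  have hc2 : c^2 ≤ Real.sin θ^2 := by
    rw [hc, div_pow, div_le_iff₀ (by positivity)]
    nlinarith [hkey]
  set s : ℝ := Real.sqrt (Real.sin θ^2 - c^2) with hs
  have hs2 : s^2 = Real.sin θ^2 - c^2 := Real.sq_sqrt (by linarith)
  refine ⟨(WithLp.equiv 2 (Fin 3 → ℝ)).symm ![1, 0, 0],
          (WithLp.equiv 2 (Fin 3 → ℝ)).symm ![Real.cos θ, c, s],
          (WithLp.equiv 2 (Fin 3 → ℝ)).symm ![Real.cos α, Real.sin α, 0],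
          ?_, ?_, ?_, ?_, ?_, ?_⟩
  · exact euclid_norm_three 1 0 0 (by norm_num)
  · exact euclid_norm_three _ _ _ (by
      have := Real.sin_sq_add_cos_sq θ
      nlinarith [hs2])
  · exact euclid_norm_three _ _ _ (by
      have := Real.sin_sq_add_cos_sq α
      nlinarith)
  · rw [InnerProductGeometry.angle,
      euclid_norm_three 1 0 0 (by norm_num),
      euclid_norm_three _ _ _ (by have := Real.sin_sq_add_cos_sq θ; nlinarith [hs2]),
      euclid_inner_three]
    simp
    exact Real.arccos_cos hθpos.le hθπ.le
  · rw [InnerProductGeometry.angle,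
      euclid_norm_three 1 0 0 (by norm_num),
      euclid_norm_three _ _ _ (by have := Real.sin_sq_add_cos_sq α; nlinarith),
      euclid_inner_three]
    simp
    exact Real.arccos_cos hα.le hαπ.le
  · rw [InnerProductGeometry.angle,
      euclid_norm_three _ _ _ (by have := Real.sin_sq_add_cos_sq θ; nlinarith [hs2]),
      euclid_norm_three _ _ _ (by have := Real.sin_sq_add_cos_sq α; nlinarith),
      euclid_inner_three]
    have : Real.cos θ * Real.cos α + c * Real.sin α + s * 0 = Real.cos β := by
      rw [hc]; field_simp; ring
    rw [this]
    simp
    exact Real.arccos_cos hβ.le hβπ.le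
end

section
/- Let w > 0 and φ ∈ (0, π), and set d = ((1 + cos φ)/2)·w, so that d and w − d equal ((1 ± cos φ)/2)·w. Define the one-crease fold map f : [0, w] → ℝ by f(t) = t for t ≤ d and f(t) = 2d − t for t ≥ d. Then: (i) f(0) = 0 and f(w) = w cos φ, so the folded endpoint lands exactly at the orthogonal projection of the tilted face's top edge; (ii) for every t ∈ [0, w], f(t) lies within distance ((1 − cos φ)/2)·w of the closed interval with endpoints 0 and w cos φ. -/
open Real

/-- One-crease collapse of a spanning face of width `w` at dihedral angle `φ`:
with crease at `d = ((1 + cos φ)/2)·w`, the fold map `f` sends `0 ↦ 0` and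
`w ↦ w cos φ`, and every point of `[0, w]` is mapped within distance
`((1 − cos φ)/2)·w` of the closed interval with endpoints `0` and `w cos φ`. -/
theorem spanning_face_crease (w φ d : ℝ) (f : ℝ → ℝ)
    (hw : 0 < w) (hφ : φ ∈ Set.Ioo 0 π)
    (hd : d = ((1 + Real.cos φ) / 2) * w)
    (hf : ∀ t, f t = if t ≤ d then t else 2 * d - t) :
    f 0 = 0 ∧ f w = w * Real.cos φ ∧
      ∀ t ∈ Set.Icc 0 w,
        Metric.infDist (f t) (Set.uIcc 0 (w * Real.cos φ)) ≤
          ((1 - Real.cos φ) / 2) * w := by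
  obtain ⟨hφ0, hφπ⟩ := hφ
  have hc1 : -1 ≤ Real.cos φ := Real.neg_one_le_cos φ
  have hc2 : Real.cos φ < 1 := by
    have := Real.cos_lt_cos_of_nonneg_of_le_pi le_rfl hφπ.le hφ0
    simpa using this
  have hd0 : 0 ≤ d := by nlinarith
  have hdw : d < w := by nlinarith
  refine ⟨by rw [hf]; simp [hd0], by rw [hf]; simp [not_le.2 hdw]; nlinarith, ?_⟩
  intro t ht
  set a := min 0 (w * Real.cos φ) with ha
  set b := max 0 (w * Real.cos φ) with hb
  have hab : a ≤ b := min_le_max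
  have huI : Set.uIcc 0 (w * Real.cos φ) = Set.Icc a b := rfl
  -- f t lies in [a, d]
  have hx : a ≤ f t ∧ f t ≤ d := by
    rw [hf]
    split_ifs with h
    · constructor
      · exact le_trans (min_le_left _ _) ht.1
      · exact h
    · push_neg at h
      constructor
      · have : w * Real.cos φ ≤ 2 * d - t := by nlinarith [ht.2]
        exact le_trans (min_le_right _ _) this
      · nlinarith
  set y := max a (min (f t) b) with hy
  have hyI : y ∈ Set.Icc a b := by
    constructor
    · exact le_max_left _ _
    · exact max_le hab (min_le_right _ _)
  have hdist : dist (f t) y ≤ ((1 - Real.cos φ) / 2) * w := by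
    rw [Real.dist_eq, abs_le]
    have hbc : w * Real.cos φ ≤ b := le_max_right _ _
    constructor
    · have : y ≤ f t := by
        apply max_le
        · exact hx.1
        · exact min_le_left _ _
      nlinarith [this]
    · have h2 : y ≥ min (f t) b := le_max_right _ _
      have hr : 0 ≤ ((1 - Real.cos φ) / 2) * w := by nlinarith
      rcases le_total (f t) b with h' | h'
      · have : min (f t) b = f t := min_eq_left h'
        rw [this] at h2
        linarith
      · have : min (f t) b = b := min_eq_right h'
        rw [this] at h2
        nlinarith [hx.2]
  calc Metric.infDist (f t) (Set.uIcc 0 (w * Real.cos φ))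
      ≤ dist (f t) y := by rw [huI]; exact Metric.infDist_le_dist_of_mem hyI
    _ ≤ _ := hdist
end
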